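/- arXiv:2503.07980 — 8 statements merged into one kernel-verified Lean document; each statement's English description precedes it below -/
import Mathlib

section
/- Let n ≥ 1 and let A = (a_{ij}) be an n×n matrix with entries in ℝ ∪ {−∞}. Then A is pseudo-diagonalizable — i.e., there exist a permutation π of {1,…,n}, reals p_1,…,p_n, and a pseudo-diagonal matrix D such that a_{ij} = p_i + D_{π(i),π(j)} − p_j for all i, j (with −∞ absorbing under addition) — if and only if every entry of A is real and for all i, j, k ∈ {1,…,n} with k ≠ i and k ≠ j one has a_{ik} + a_{kj} = a_{ij} when i ≠ j, and a_{ik} + a_{ki} = 0 when i = j. -/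
/-!
Conjugation by a permutation and a diagonal of reals keeps the off-diagonal zeros of a
pseudo-diagonal matrix zero, and the diagonal of `D` is free, so `A` is pseudo-diagonalizable
exactly when it is real with off-diagonal entries `a i j = p i - p j`. Such potential differences
are characterized by the two three-index identities: necessity is telescoping, and for
sufficiency one takes `p i = a i z` for a fixed base index `z`.
-/

variable {ι : Type*}

theorem exists_perm_conj_pseudoDiag_iff (a : ι → ι → ℝ) :
    (∃ (π : Equiv.Perm ι) (p : ι → ℝ) (D : ι → ι → ℝ), (∀ i j, i ≠ j → D i j = 0) ∧
        ∀ i j, a i j = p i + D (π i) (π j) - p j) ↔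
      ∃ p : ι → ℝ, ∀ i j, i ≠ j → a i j = p i - p j := by
  classical
  constructor
  · rintro ⟨π, p, D, hD, ha⟩
    exact ⟨p, fun i j hij => by rw [ha, hD _ _ (π.injective.ne hij), add_zero]⟩
  · rintro ⟨p, hp⟩
    refine ⟨1, p, fun i j => if i = j then a i i else 0, fun i j hij => if_neg hij, fun i j => ?_⟩
    rcases eq_or_ne i j with rfl | hij
    · simp
    · simp [hij, hp i j hij]

theorem exists_offDiag_eq_sub_iff (z : ι) (a : ι → ι → ℝ) :
    (∃ p : ι → ℝ, ∀ i j, i ≠ j → a i j = p i - p j) ↔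
      ∀ i j k, k ≠ i → k ≠ j →
        (i ≠ j → a i k + a k j = a i j) ∧ (i = j → a i k + a k i = 0) := by
  classical
  constructor
  · rintro ⟨p, hp⟩ i j k hki hkj
    rw [hp i k hki.symm, hp k j hkj]
    exact ⟨fun hij => by rw [hp i j hij]; ring, fun hij => by rw [hp k i hki, hij]; ring⟩
  · intro h
    have anti : ∀ j, j ≠ z → a z j = -a j z := fun j hj =>
      eq_neg_of_add_eq_zero_left ((h z z j hj hj).2 rfl)
    refine ⟨fun i => if i = z then 0 else a i z, fun i j hij => ?_⟩
    by_cases hi : i = z <;> by_cases hj : j = z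
    · exact absurd (hi.trans hj.symm) hij
    · subst hi; simp [hj, anti j hj]
    · subst hj; simp [hi]
    · simp only [hi, hj, if_false, ← (h i j z (Ne.symm hi) (Ne.symm hj)).1 hij, anti j hj]
      ring

/-- A matrix `A` over `ℝ ∪ {−∞}` is pseudo-diagonalizable (similar, via a
generalized permutation matrix given by a permutation `π` and reals `p i`, to a
pseudo-diagonal matrix `D`, i.e. a real matrix whose off-diagonal entries are `0`)
if and only if `A` is finite and satisfies `a_{ik} + a_{kj} = a_{ij}` for `i ≠ j` and
`a_{ik} + a_{ki} = 0` for `i = j`, whenever `k ≠ i, j`. -/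
theorem pseudoDiagonalizable_iff {n : ℕ} (hn : 1 ≤ n)
    (A : Fin n → Fin n → WithBot ℝ) :
    (∃ (π : Equiv.Perm (Fin n)) (p : Fin n → ℝ) (D : Fin n → Fin n → ℝ),
        (∀ i j, i ≠ j → D i j = 0) ∧
        ∀ i j, A i j = ((p i + D (π i) (π j) - p j : ℝ) : WithBot ℝ)) ↔
      ((∀ i j, A i j ≠ ⊥) ∧
        ∀ i j k : Fin n, k ≠ i → k ≠ j →
          (i ≠ j → A i k + A k j = A i j) ∧ (i = j → A i k + A k i = 0)) := by
  by_cases hfin : ∀ i j, A i j ≠ ⊥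
  · choose a ha using fun i j => WithBot.ne_bot_iff_exists.mp (hfin i j)
    obtain rfl : A = fun i j => (a i j : WithBot ℝ) := funext₂ fun i j => (ha i j).symm
    simp only [WithBot.coe_inj, ← WithBot.coe_add, ← WithBot.coe_zero, ne_eq, WithBot.coe_ne_bot,
      not_false_eq_true, implies_true, true_and]
    rw [exists_perm_conj_pseudoDiag_iff, exists_offDiag_eq_sub_iff ⟨0, hn⟩]
  · refine iff_of_false (fun ⟨π, p, D, _, hA⟩ => hfin fun i j => ?_) (fun h => hfin h.1)
    exact hA i j ▸ WithBot.coe_ne_bot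
end

section
/- Let A = (a_{ij}) ∈ ℝ^{n×n}. Then the following are equivalent: (i) for all i, j, k ∈ {1,…,n} with k ≠ i and k ≠ j, a_{ik} + a_{kj} = a_{ij} when i ≠ j and a_{ik} + a_{ki} = 0 when i = j; (ii) a_{ij} + a_{ji} = 0 for all 1 ≤ i < j ≤ n, and a_{ij} + a_{j,i+1} + a_{i+1,i} = 0 for all i, j with 1 ≤ i ≤ n−2 and i+2 ≤ j ≤ n. -/
private def Sfun {n : ℕ} (a : Fin n → Fin n → ℝ) (t : ℕ) : ℝ :=
  ∑ r ∈ Finset.range t, if h : r + 1 < n then a ⟨r, Nat.lt_of_succ_lt h⟩ ⟨r + 1, h⟩ else 0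

private lemma Sfun_succ {n : ℕ} (a : Fin n → Fin n → ℝ) (t : ℕ) :
    Sfun a (t + 1) = Sfun a t +
      (if h : t + 1 < n then a ⟨t, Nat.lt_of_succ_lt h⟩ ⟨t + 1, h⟩ else 0) :=
  Finset.sum_range_succ _ _

private lemma succ_entry {n : ℕ} (a : Fin n → Fin n → ℝ) (i : Fin n) (h1 : (i : ℕ) + 1 < n) :
    a i ⟨(i : ℕ) + 1, h1⟩ = Sfun a ((i : ℕ) + 1) - Sfun a (i : ℕ) := by
  rw [Sfun_succ, dif_pos h1]
  have : (⟨(i : ℕ), Nat.lt_of_succ_lt h1⟩ : Fin n) = i := rfl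
  rw [this]; ring

private lemma key_lemma {n : ℕ} (a : Fin n → Fin n → ℝ)
    (step : ∀ i j i' : Fin n, (i' : ℕ) = (i : ℕ) + 1 → (i : ℕ) + 2 ≤ (j : ℕ) →
      a i j = a i i' + a i' j) :
    ∀ m : ℕ, ∀ i j : Fin n, (i : ℕ) + m + 1 = (j : ℕ) → a i j = Sfun a (j : ℕ) - Sfun a (i : ℕ) := by
  intro m
  induction m with
  | zero =>
    intro i j hij
    have h1 : (i : ℕ) + 1 < n := hij ▸ j.isLt
    have hj : j = ⟨(i : ℕ) + 1, h1⟩ := Fin.ext (show (j : ℕ) = (i : ℕ) + 1 by omega)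
    rw [hj]
    exact succ_entry a i h1
  | succ m ih =>
    intro i j hij
    have h1 : (i : ℕ) + 1 < n := by have := j.isLt; omega
    set i' : Fin n := ⟨(i : ℕ) + 1, h1⟩ with hi'
    have hstep := step i j i' rfl (by omega)
    have hih := ih i' j (by show (i : ℕ) + 1 + m + 1 = (j : ℕ); omega)
    have hb := succ_entry a i h1
    have hcoe : ((i' : Fin n) : ℕ) = (i : ℕ) + 1 := rfl
    rw [hcoe] at hih
    linarith [hstep, hih, hb]

private lemma all_entries {n : ℕ} (a : Fin n → Fin n → ℝ)
    (antisym : ∀ i j : Fin n, i ≠ j → a i j + a j i = 0)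
    (step : ∀ i j i' : Fin n, (i' : ℕ) = (i : ℕ) + 1 → (i : ℕ) + 2 ≤ (j : ℕ) →
      a i j = a i i' + a i' j) :
    ∀ p q : Fin n, p ≠ q → a p q = Sfun a (q : ℕ) - Sfun a (p : ℕ) := by
  intro p q hpq
  rcases lt_trichotomy (p : ℕ) (q : ℕ) with h | h | h
  · exact key_lemma a step ((q : ℕ) - (p : ℕ) - 1) p q (by omega)
  · exact absurd (Fin.ext h) hpq
  · have := key_lemma a step ((p : ℕ) - (q : ℕ) - 1) q p (by omega)
    have h2 := antisym p q hpq
    linarith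

/-- For a real `n × n` matrix `a`, the pseudo-diagonalizability criterion (i)
is equivalent to the conditions (ii) checked by the verification algorithm.
Indices are 0-based: the paper's `i + 1` is represented by an index `i'` with
`(i' : ℕ) = (i : ℕ) + 1`. -/
theorem criterion_iff_algorithm_conditions {n : ℕ} (a : Fin n → Fin n → ℝ) :
    (∀ i j k : Fin n, k ≠ i → k ≠ j →
        (i ≠ j → a i k + a k j = a i j) ∧ (i = j → a i k + a k i = 0)) ↔
      ((∀ i j : Fin n, i < j → a i j + a j i = 0) ∧
        ∀ i j i' : Fin n, (i' : ℕ) = (i : ℕ) + 1 → (i : ℕ) + 2 ≤ (j : ℕ) →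
          a i j + a j i' + a i' i = 0) := by
  constructor
  · intro h
    constructor
    · intro i j hij
      exact (h i i j hij.ne' hij.ne').2 rfl
    · intro i j i' hi' hj
      have hne1 : i' ≠ i := by intro e; apply_fun (Fin.val) at e; omega
      have hne2 : i' ≠ j := by intro e; apply_fun (Fin.val) at e; omega
      have hne3 : i ≠ j := by intro e; apply_fun (Fin.val) at e; omega
      have t1 := (h i j i' hne1 hne2).1 hne3
      have t2 := (h i i i' hne1 hne1).2 rfl
      have t3 := (h j j i' hne2 hne2).2 rfl
      linarith
  · rintro ⟨h1, h2⟩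
    have antisym : ∀ i j : Fin n, i ≠ j → a i j + a j i = 0 := by
      intro i j hij
      rcases lt_or_gt_of_ne hij with h | h
      · exact h1 i j h
      · have := h1 j i h
        linarith
    have step : ∀ i j i' : Fin n, (i' : ℕ) = (i : ℕ) + 1 → (i : ℕ) + 2 ≤ (j : ℕ) →
        a i j = a i i' + a i' j := by
      intro i j i' hi' hj
      have t := h2 i j i' hi' hj
      have s1 := antisym i' i (by intro e; apply_fun (Fin.val) at e; omega)
      have s2 := antisym j i' (by intro e; apply_fun (Fin.val) at e; omega)
      linarith
    have eqS := all_entries a antisym step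
    intro i j k hki hkj
    constructor
    · intro hij
      have e1 := eqS i k (Ne.symm hki)
      have e2 := eqS k j hkj
      have e3 := eqS i j hij
      linarith
    · intro hij
      subst hij
      exact antisym i k (Ne.symm hki)
end

section
/- Let D = pdiag(d_1,…,d_n) be a pseudo-diagonal matrix with d_1 ≤ … ≤ d_s ≤ 0 ≤ d_{s+1} ≤ … ≤ d_n, where n ≥ 3 and 1 ≤ s < n. Then for every integer k ≥ 2 and all i, j ∈ {1,…,n}: (D^k)_{ij} = (k−2)d_n if max(i,j) ≤ s; (D^k)_{ij} = max(k·d_i, (k−2)d_n) if i = j > s; and (D^k)_{ij} = max((k−1)·d_{max(i,j)}, (k−2)d_n) if i ≠ j and max(i,j) > s. -/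
open Finset

/-- Max-plus matrix product: `(A ⊗ B) i j = max_k (A i k + B k j)`. -/
noncomputable def mpMul {n : ℕ} [NeZero n] (A B : Fin n → Fin n → ℝ) :
    Fin n → Fin n → ℝ :=
  fun i j => univ.sup' univ_nonempty fun k => A i k + B k j

/-- `mpPow A k` is the `k`-th max-plus power of `A` (for `k ≥ 1`). -/
noncomputable def mpPow {n : ℕ} [NeZero n] (A : Fin n → Fin n → ℝ) (k : ℕ) :
    Fin n → Fin n → ℝ :=
  (mpMul A)^[k - 1] A

/-! A max-plus power `(D^k)_{ij}` is the largest weight of a walk from `i` to `j` with `k`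
steps in which a loop at `m` weighs `d_m` and every move weighs `0`. A walk staying inside
`{i, j}` does best by looping at the larger of `d_i`, `d_j` in every step not spent moving, which
gives `k d_i` if `i = j` and `(k - 1) max (d_i, d_j)` otherwise; a walk through a third vertex
(there is one since `n ≥ 3`) spends two steps moving and can loop at the largest entry `d_n ≥ 0`
in all others, which gives `(k - 2) d_n`. This closed form is checked by induction on `k`
through `(D ⊗ B)_{ij} = max (d_i + B_{ij}, max_{m ≠ i} B_{mj})`; the signs of the `d_i` then
decide which term of the maximum wins. -/

section MaxPlus

variable {n : ℕ} [NeZero n]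

theorem mpMul_le_iff {A B : Fin n → Fin n → ℝ} {i j : Fin n} {c : ℝ} :
    mpMul A B i j ≤ c ↔ ∀ m, A i m + B m j ≤ c := by
  simp [mpMul]

theorem add_le_mpMul (A B : Fin n → Fin n → ℝ) (i m j : Fin n) :
    A i m + B m j ≤ mpMul A B i j :=
  le_sup' (fun m => A i m + B m j) (mem_univ m)

theorem mpPow_one (A : Fin n → Fin n → ℝ) : mpPow A 1 = A := rfl

theorem mpPow_succ (A : Fin n → Fin n → ℝ) {k : ℕ} (hk : 1 ≤ k) :
    mpPow A (k + 1) = mpMul A (mpPow A k) := by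
  obtain ⟨k, rfl⟩ := Nat.exists_eq_add_of_le' hk
  exact Function.iterate_succ_apply' _ _ _

end MaxPlus

section PseudoDiagonal

variable {n : ℕ} {d : Fin n → ℝ} {M : ℝ}

def pdiag (d : Fin n → ℝ) : Fin n → Fin n → ℝ :=
  fun i j => if i = j then d i else 0

@[simp] theorem pdiag_self (d : Fin n → ℝ) (i : Fin n) : pdiag d i i = d i := if_pos rfl

@[simp] theorem pdiag_of_ne (d : Fin n → ℝ) {i j : Fin n} (h : i ≠ j) : pdiag d i j = 0 :=
  if_neg h

noncomputable def pdiagPowFormula (d : Fin n → ℝ) (M : ℝ) (k : ℕ) : Fin n → Fin n → ℝ :=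
  fun i j => if i = j then max ((k + 2) * d i) (k * M)
    else max ((k + 1) * max (d i) (d j)) (k * M)

theorem pdiagPowFormula_self (d : Fin n → ℝ) (M : ℝ) (k : ℕ) (i : Fin n) :
    pdiagPowFormula d M k i i = max ((k + 2) * d i) (k * M) := if_pos rfl

theorem pdiagPowFormula_of_ne (d : Fin n → ℝ) (M : ℝ) (k : ℕ) {i j : Fin n} (h : i ≠ j) :
    pdiagPowFormula d M k i j = max ((k + 1) * max (d i) (d j)) (k * M) := if_neg h

theorem mul_le_pdiagPowFormula (k : ℕ) (i j : Fin n) : k * M ≤ pdiagPowFormula d M k i j := by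
  unfold pdiagPowFormula
  split_ifs <;> exact le_max_right _ _

theorem succ_mul_le_pdiagPowFormula (k : ℕ) {m : Fin n} (hm : 0 ≤ d m) (j : Fin n) :
    (k + 1) * d m ≤ pdiagPowFormula d M k m j := by
  obtain rfl | hmj := eq_or_ne m j
  · rw [pdiagPowFormula_self]
    exact le_max_of_le_left (by linarith)
  · rw [pdiagPowFormula_of_ne _ _ _ hmj]
    exact le_max_of_le_left (by gcongr; exact le_max_left _ _)

variable [NeZero n]

theorem mpMul_pdiag_le_iff {B : Fin n → Fin n → ℝ} {i j : Fin n} {c : ℝ} :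
    mpMul (pdiag d) B i j ≤ c ↔ d i + B i j ≤ c ∧ ∀ m, m ≠ i → B m j ≤ c := by
  rw [mpMul_le_iff]
  constructor
  · intro h
    refine ⟨by simpa using h i, fun m hm => by simpa [pdiag_of_ne d hm.symm] using h m⟩
  · rintro ⟨hi, hm⟩ m
    obtain rfl | hmi := eq_or_ne m i
    · simpa using hi
    · simpa [pdiag_of_ne d hmi.symm] using hm m hmi

theorem add_le_mpMul_pdiag (B : Fin n → Fin n → ℝ) (i j : Fin n) :
    d i + B i j ≤ mpMul (pdiag d) B i j := by
  simpa using add_le_mpMul (pdiag d) B i i j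

theorem le_mpMul_pdiag_of_ne (B : Fin n → Fin n → ℝ) {i m : Fin n} (hmi : m ≠ i)
    (j : Fin n) :
    B m j ≤ mpMul (pdiag d) B i j := by
  simpa [pdiag_of_ne d hmi.symm] using add_le_mpMul (pdiag d) B i m j

theorem mpMul_pdiag_self (hn : 2 < n) (M : ℝ) :
    mpMul (pdiag d) (pdiag d) = pdiagPowFormula d M 0 := by
  funext i j
  apply le_antisymm
  · rw [mpMul_pdiag_le_iff]
    refine ⟨?_, fun m hmi => ?_⟩
    · obtain rfl | hij := eq_or_ne i j
      · simp [pdiagPowFormula_self, two_mul]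
      · simp [pdiagPowFormula_of_ne _ _ _ hij, pdiag_of_ne _ hij]
    · obtain rfl | hmj := eq_or_ne m j
      · simp [pdiagPowFormula_of_ne _ _ _ hmi.symm]
      · simpa [pdiag_of_ne _ hmj] using mul_le_pdiagPowFormula (d := d) (M := M) 0 i j
  · obtain ⟨m, hmi, hmj⟩ := Fin.exists_ne_and_ne_of_two_lt i j hn
    have hzero : (0 : ℝ) ≤ mpMul (pdiag d) (pdiag d) i j := by
      simpa [pdiag_of_ne _ hmj] using le_mpMul_pdiag_of_ne (pdiag d) hmi j
    obtain rfl | hij := eq_or_ne i j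
    · rw [pdiagPowFormula_self]
      refine max_le ?_ (by simpa using hzero)
      simpa [two_mul] using add_le_mpMul_pdiag (d := d) (pdiag d) i i
    · simp only [pdiagPowFormula_of_ne _ _ _ hij, Nat.cast_zero, zero_add, one_mul, zero_mul]
      refine max_le (max_le ?_ ?_) hzero
      · simpa [pdiag_of_ne _ hij] using add_le_mpMul_pdiag (pdiag d) i j
      · simpa using le_mpMul_pdiag_of_ne (pdiag d) (Ne.symm hij) j

theorem mpMul_pdiag_pdiagPowFormula_le (hle : ∀ m, d m ≤ M) (hM0 : 0 ≤ M) (k : ℕ)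
    (i j : Fin n) :
    mpMul (pdiag d) (pdiagPowFormula d M k) i j ≤ pdiagPowFormula d M (k + 1) i j := by
  have hk : (0 : ℝ) ≤ k := k.cast_nonneg
  rw [mpMul_pdiag_le_iff]
  refine ⟨?_, fun m hmi => ?_⟩
  · obtain rfl | hij := eq_or_ne i j
    · rw [pdiagPowFormula_self, pdiagPowFormula_self, ← max_add_add_left]
      push_cast
      exact max_le_max (by linarith) (by linarith [hle i])
    · rw [pdiagPowFormula_of_ne _ _ _ hij, pdiagPowFormula_of_ne _ _ _ hij, ← max_add_add_left]
      push_cast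
      exact max_le_max (by linarith [le_max_left (d i) (d j)]) (by linarith [hle i])
  · obtain rfl | hmj := eq_or_ne m j
    · rw [pdiagPowFormula_self, pdiagPowFormula_of_ne _ _ _ hmi.symm]
      push_cast
      have hmax := le_max_right (d i) (d m)
      exact max_le_max (by nlinarith) (by linarith)
    · refine le_trans ?_ (mul_le_pdiagPowFormula (k + 1) i j)
      rw [pdiagPowFormula_of_ne _ _ _ hmj]
      push_cast
      exact max_le (by gcongr; exact max_le (hle m) (hle j)) (by linarith)

theorem pdiagPowFormula_succ_le_mpMul_pdiag (hM : IsGreatest (Set.range d) M) (hM0 : 0 ≤ M)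
    (k : ℕ) (i j : Fin n) :
    pdiagPowFormula d M (k + 1) i j ≤ mpMul (pdiag d) (pdiagPowFormula d M k) i j := by
  obtain ⟨⟨N, rfl⟩, hN⟩ := hM
  have hk : (0 : ℝ) ≤ k := k.cast_nonneg
  have hdiag : ((k : ℝ) + 1) * d N ≤ mpMul (pdiag d) (pdiagPowFormula d (d N) k) i j := by
    obtain rfl | hNi := eq_or_ne N i
    · refine le_trans ?_ (add_le_mpMul_pdiag _ N j)
      linarith [mul_le_pdiagPowFormula (d := d) (M := d N) k N j]
    · exact (succ_mul_le_pdiagPowFormula k hM0 j).trans (le_mpMul_pdiag_of_ne _ hNi j)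
  obtain rfl | hij := eq_or_ne i j
  · rw [pdiagPowFormula_self]
    push_cast
    refine max_le (le_trans ?_ (add_le_mpMul_pdiag _ i i)) hdiag
    rw [pdiagPowFormula_self]
    linarith [le_max_left ((k + 2) * d i) (k * d N)]
  · rw [pdiagPowFormula_of_ne _ _ _ hij]
    push_cast
    refine max_le ?_ hdiag
    rcases le_total (d j) (d i) with hji | hij'
    · rw [max_eq_left hji]
      refine le_trans ?_ (add_le_mpMul_pdiag _ i j)
      rw [pdiagPowFormula_of_ne _ _ _ hij, max_eq_left hji]
      linarith [le_max_left ((k + 1) * d i) (k * d N)]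
    · rw [max_eq_right hij']
      refine le_trans ?_ (le_mpMul_pdiag_of_ne _ hij.symm j)
      rw [pdiagPowFormula_self]
      exact le_max_of_le_left (by linarith)

theorem mpMul_pdiag_pdiagPowFormula (hM : IsGreatest (Set.range d) M) (hM0 : 0 ≤ M) (k : ℕ) :
    mpMul (pdiag d) (pdiagPowFormula d M k) = pdiagPowFormula d M (k + 1) :=
  funext₂ fun i j =>
    le_antisymm (mpMul_pdiag_pdiagPowFormula_le (fun m => hM.2 ⟨m, rfl⟩) hM0 k i j)
      (pdiagPowFormula_succ_le_mpMul_pdiag hM hM0 k i j)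

theorem mpPow_pdiag (hn : 2 < n) (hM : IsGreatest (Set.range d) M) (hM0 : 0 ≤ M) (k : ℕ) :
    mpPow (pdiag d) (k + 2) = pdiagPowFormula d M k := by
  induction k with
  | zero => rw [mpPow_succ _ le_rfl, mpPow_one, mpMul_pdiag_self hn]
  | succ k ih => rw [mpPow_succ _ (by omega), ih, mpMul_pdiag_pdiagPowFormula hM hM0]

end PseudoDiagonal

/-- Indices are 0-based: the paper's `max(i,j) ≤ s` reads `(max i j : ℕ) < s`, and `dₙ` is
`d ⟨n-1, _⟩`. -/
theorem mpPow_pseudoDiagonal_mixed {n : ℕ} [NeZero n] (hn : 3 ≤ n)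
    (s : ℕ) (hs2 : s < n)
    (d : Fin n → ℝ) (hmono : Monotone d)
    (hneg : ∀ i : Fin n, (i : ℕ) < s → d i ≤ 0)
    (hpos : ∀ i : Fin n, s ≤ (i : ℕ) → 0 ≤ d i)
    (D : Fin n → Fin n → ℝ)
    (hD : ∀ i j, D i j = if i = j then d i else 0)
    (k : ℕ) (hk : 2 ≤ k) (i j : Fin n) :
    (((max i j : Fin n) : ℕ) < s →
        mpPow D k i j = ((k : ℝ) - 2) * d ⟨n - 1, by omega⟩) ∧
    (i = j → s ≤ (i : ℕ) →
        mpPow D k i j = max ((k : ℝ) * d i) (((k : ℝ) - 2) * d ⟨n - 1, by omega⟩)) ∧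
    (i ≠ j → s ≤ ((max i j : Fin n) : ℕ) →
        mpPow D k i j =
          max (((k : ℝ) - 1) * d (max i j)) (((k : ℝ) - 2) * d ⟨n - 1, by omega⟩)) := by
  set N : Fin n := ⟨n - 1, by omega⟩
  have hN : IsGreatest (Set.range d) (d N) :=
    ⟨⟨N, rfl⟩, by rintro _ ⟨m, rfl⟩; exact hmono (Fin.le_def.2 (by simp only [N]; omega))⟩
  have hN0 : 0 ≤ d N := hpos N (by simp only [N]; omega)
  obtain ⟨k, rfl⟩ := Nat.exists_eq_add_of_le' hk
  have hDd : D = pdiag d := funext₂ hD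
  rw [hDd, mpPow_pdiag (by omega) hN hN0]
  push_cast
  refine ⟨fun hs => ?_, fun hij _ => ?_, fun hij _ => ?_⟩
  · have hk0 : (0 : ℝ) ≤ k := k.cast_nonneg
    have hi := hneg i ((Fin.le_def.1 (le_max_left i j)).trans_lt hs)
    have hj := hneg j ((Fin.le_def.1 (le_max_right i j)).trans_lt hs)
    unfold pdiagPowFormula
    split_ifs
    · rw [max_eq_right (by nlinarith)]; ring
    · rw [max_eq_right (by nlinarith [max_le hi hj])]; ring
  · subst hij
    rw [pdiagPowFormula_self]
    ring_nf
  · rw [pdiagPowFormula_of_ne _ _ _ hij, hmono.map_max]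
    ring_nf
end

section
/- Let D = pdiag(d_1,…,d_n) be a pseudo-diagonal matrix with 0 ≤ d_1 ≤ … ≤ d_n and n ≥ 3. Then for every integer k ≥ 2 and all i, j ∈ {1,…,n}: (D^k)_{ii} = max(k·d_i, (k−2)d_n), and for i ≠ j, (D^k)_{ij} = max((k−1)·d_{max(i,j)}, (k−2)d_n). -/
open Finset

/-- Powers of a pseudo-diagonal matrix `D = pdiag(d₁, …, dₙ)` with
`0 ≤ d₁ ≤ … ≤ dₙ` and `n ≥ 3`: for `k ≥ 2`, the diagonal entries of `D^k` are
`max (k·dᵢ) ((k-2)·dₙ)` and the off-diagonal entries are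
`max ((k-1)·d_{max(i,j)}) ((k-2)·dₙ)`. -/
theorem mpPow_pseudoDiagonal_nonneg {n : ℕ} [NeZero n] (hn : 3 ≤ n)
    (d : Fin n → ℝ) (hmono : Monotone d) (hpos : ∀ i, 0 ≤ d i)
    (D : Fin n → Fin n → ℝ)
    (hD : ∀ i j, D i j = if i = j then d i else 0)
    (k : ℕ) (hk : 2 ≤ k) (i j : Fin n) :
    (i = j →
        mpPow D k i j = max ((k : ℝ) * d i) (((k : ℝ) - 2) * d ⟨n - 1, by omega⟩)) ∧
    (i ≠ j →
        mpPow D k i j =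
          max (((k : ℝ) - 1) * d (max i j)) (((k : ℝ) - 2) * d ⟨n - 1, by omega⟩)) := by
  set N : Fin n := ⟨n - 1, by omega⟩ with hNdef
  have hleN : ∀ a : Fin n, a ≤ N := by
    intro a
    rw [Fin.le_def]
    have := a.isLt
    simp only [hNdef]
    omega
  have hdle : ∀ a : Fin n, d a ≤ d N := fun a => hmono (hleN a)
  have hdN : 0 ≤ d N := hpos N
  suffices H : ∀ k : ℕ, 2 ≤ k → ∀ i j : Fin n,
      (i = j → mpPow D k i j = max ((k : ℝ) * d i) (((k : ℝ) - 2) * d N)) ∧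
      (i ≠ j → mpPow D k i j =
        max (((k : ℝ) - 1) * d (max i j)) (((k : ℝ) - 2) * d N)) from H k hk i j
  intro k hk
  induction k, hk using Nat.le_induction with
  | base =>
    intro i j
    have h2 : mpPow D 2 = mpMul D D := by simp [mpPow]
    have hdiM : d i ≤ d (max i j) := hmono (le_max_left i j)
    have hdjM : d j ≤ d (max i j) := hmono (le_max_right i j)
    rw [h2]
    push_cast
    simp only [mpMul]
    constructor
    · rintro rfl
      apply le_antisymm
      · apply Finset.sup'_le
        intro m _
        by_cases hm : m = i
        · subst hm
          rw [hD, if_pos rfl]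
          exact le_max_of_le_left (by linarith)
        · rw [hD, if_neg (fun h => hm h.symm), hD, if_neg hm]
          exact le_max_of_le_right (by linarith)
      · have hwit : (2:ℝ) * d i ≤ univ.sup' univ_nonempty fun m => D i m + D m i := by
          refine le_trans ?_ (Finset.le_sup' (fun m => D i m + D m i) (mem_univ i))
          rw [hD, if_pos rfl]
          linarith
        exact max_le hwit (le_trans (by linarith [hpos i]) hwit)
    · intro hij
      apply le_antisymm
      · apply Finset.sup'_le
        intro m _
        by_cases hmi : m = i
        · subst hmi
          rw [hD, if_pos rfl, hD, if_neg hij]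
          exact le_max_of_le_left (by linarith)
        · by_cases hmj : m = j
          · subst hmj
            rw [hD, if_neg (fun h => hmi h.symm), hD, if_pos rfl]
            exact le_max_of_le_left (by linarith)
          · rw [hD, if_neg (fun h => hmi h.symm), hD, if_neg hmj]
            exact le_max_of_le_left (by linarith [hpos (max i j)])
      · have hwit : ((2:ℝ) - 1) * d (max i j) ≤
            univ.sup' univ_nonempty fun m => D i m + D m j := by
          rcases max_cases i j with ⟨hMeq, _⟩ | ⟨hMeq, _⟩
          · refine le_trans ?_ (Finset.le_sup' (fun m => D i m + D m j) (mem_univ i))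
            rw [hD, if_pos rfl, hD, if_neg hij, hMeq]
            linarith
          · refine le_trans ?_ (Finset.le_sup' (fun m => D i m + D m j) (mem_univ j))
            rw [hD, if_neg hij, hD, if_pos rfl, hMeq]
            linarith
        exact max_le hwit (le_trans (by linarith [hpos (max i j)]) hwit)
  | succ k hk2 ih =>
    intro i j
    have hkR : (2:ℝ) ≤ (k:ℝ) := by exact_mod_cast hk2
    have hrec : mpPow D (k+1) = mpMul D (mpPow D k) := by
      unfold mpPow
      rw [show k + 1 - 1 = (k-1) + 1 from by omega, Function.iterate_succ_apply']
    have ihd : ∀ a : Fin n, mpPow D k a a = max ((k:ℝ) * d a) (((k:ℝ)-2) * d N) :=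
      fun a => (ih a a).1 rfl
    have iho : ∀ a b : Fin n, a ≠ b →
        mpPow D k a b = max (((k:ℝ)-1) * d (max a b)) (((k:ℝ)-2) * d N) :=
      fun a b h => (ih a b).2 h
    have hmul1 : ∀ a : Fin n, ((k:ℝ)-1) * d a ≤ ((k:ℝ)-1) * d N :=
      fun a => mul_le_mul_of_nonneg_left (hdle a) (by linarith)
    have hmulk : ∀ a : Fin n, (k:ℝ) * d a ≤ (k:ℝ) * d N :=
      fun a => mul_le_mul_of_nonneg_left (hdle a) (by linarith)
    have hdiM : d i ≤ d (max i j) := hmono (le_max_left i j)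
    have hdjM : d j ≤ d (max i j) := hmono (le_max_right i j)
    rw [hrec]
    push_cast
    rw [show ((k:ℝ) + 1 - 2) = (k:ℝ) - 1 from by ring,
      show ((k:ℝ) + 1 - 1) = (k:ℝ) from by ring]
    simp only [mpMul]
    constructor
    · rintro rfl
      apply le_antisymm
      · apply Finset.sup'_le
        intro m _
        by_cases hm : m = i
        · subst hm
          rw [hD, if_pos rfl, ihd]
          rcases le_total ((k:ℝ) * d m) (((k:ℝ)-2) * d N) with h | h
          · rw [max_eq_right h]
            exact le_max_of_le_right (by linarith [hdle m])
          · rw [max_eq_left h]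
            exact le_max_of_le_left (by linarith)
        · rw [hD, if_neg (fun h => hm h.symm), iho m i hm, zero_add]
          exact le_max_of_le_right (max_le (hmul1 _) (by linarith))
      · apply max_le
        · refine le_trans ?_ (Finset.le_sup' (fun m => D i m + mpPow D k m i) (mem_univ i))
          rw [hD, if_pos rfl, ihd]
          have := le_max_left ((k:ℝ) * d i) (((k:ℝ)-2) * d N)
          linarith
        · obtain ⟨m, hmi, hmax⟩ : ∃ m : Fin n, m ≠ i ∧ max m i = N := by
            rcases eq_or_ne i N with rfl | hiN
            · refine ⟨⟨0, by omega⟩, ?_, max_eq_right (hleN _)⟩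
              intro h
              have := congrArg Fin.val h
              simp only [hNdef] at this
              omega
            · exact ⟨N, fun h => hiN h.symm, max_eq_left (hleN i)⟩
          refine le_trans ?_ (Finset.le_sup' (fun m => D i m + mpPow D k m i) (mem_univ m))
          rw [hD, if_neg (fun h => hmi h.symm), iho m i hmi, hmax, zero_add]
          exact le_max_left _ _
    · intro hij
      apply le_antisymm
      · apply Finset.sup'_le
        intro m _
        by_cases hmi : m = i
        · subst hmi
          rw [hD, if_pos rfl, iho m j hij]
          rcases le_total (((k:ℝ)-1) * d (max m j)) (((k:ℝ)-2) * d N) with h | h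
          · rw [max_eq_right h]
            exact le_max_of_le_right (by linarith [hdle m])
          · rw [max_eq_left h]
            exact le_max_of_le_left (by linarith)
        · by_cases hmj : m = j
          · subst hmj
            rw [hD, if_neg (fun h => hmi h.symm), ihd m, zero_add]
            refine max_le (le_max_of_le_left ?_) (le_max_of_le_right (by linarith))
            exact mul_le_mul_of_nonneg_left hdjM (by linarith)
          · rw [hD, if_neg (fun h => hmi h.symm), iho m j hmj, zero_add]
            exact le_max_of_le_right (max_le (hmul1 _) (by linarith))
      · have hA : (k:ℝ) * d (max i j) ≤
            univ.sup' univ_nonempty fun m => D i m + mpPow D k m j := by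
          rcases max_cases i j with ⟨hMeq, _⟩ | ⟨hMeq, _⟩
          · refine le_trans ?_ (Finset.le_sup' (fun m => D i m + mpPow D k m j) (mem_univ i))
            rw [hD, if_pos rfl, iho i j hij]
            have h1 := le_max_left (((k:ℝ)-1) * d (max i j)) (((k:ℝ)-2) * d N)
            have h2 : d (max i j) = d i := by rw [hMeq]
            linarith
          · refine le_trans ?_ (Finset.le_sup' (fun m => D i m + mpPow D k m j) (mem_univ j))
            rw [hD, if_neg hij, ihd j, zero_add]
            have h2 : d (max i j) = d j := by rw [hMeq]
            rw [h2]
            exact le_max_left _ _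
        have hB : ((k:ℝ)-1) * d N ≤
            univ.sup' univ_nonempty fun m => D i m + mpPow D k m j := by
          rcases eq_or_ne i N with rfl | hiN
          · refine le_trans ?_ hA
            rw [max_eq_left (hleN j)]
            linarith
          · refine le_trans ?_ (Finset.le_sup' (fun m => D i m + mpPow D k m j) (mem_univ N))
            rw [hD, if_neg hiN, zero_add]
            rcases eq_or_ne N j with rfl | hNj
            · rw [ihd]
              have := le_max_left ((k:ℝ) * d N) (((k:ℝ)-2) * d N)
              linarith
            · rw [iho N j hNj, max_eq_left (hleN j)]
              exact le_max_left _ _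
        exact max_le hA hB
end

section
/- Let D = pdiag(d_1,…,d_n) be a pseudo-diagonal matrix with d_1 ≤ … ≤ d_n ≤ 0 and n ≥ 3. Then for every integer k ≥ 2, D^k is the matrix all of whose entries equal the real number 0. -/
open Finset

lemma aux_exists_ne {n : ℕ} (hn : 3 ≤ n) (i j : Fin n) :
    ∃ m : Fin n, m ≠ i ∧ m ≠ j := by
  by_contra h
  push_neg at h
  have hsub : (univ : Finset (Fin n)) ⊆ {i, j} := by
    intro m _
    rcases eq_or_ne m i with h1 | h1
    · simp [h1]
    · simp [h m h1]
  have := Finset.card_le_card hsub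
  have hc : ({i, j} : Finset (Fin n)).card ≤ 2 := Finset.card_insert_le _ _ |>.trans (by simp)
  simp [Finset.card_univ] at this
  omega

lemma aux_sup_zero {n : ℕ} [NeZero n] (f : Fin n → ℝ) (hle : ∀ k, f k ≤ 0)
    (m : Fin n) (hm : f m = 0) :
    univ.sup' univ_nonempty f = 0 := by
  refine le_antisymm (Finset.sup'_le _ _ fun k _ => hle k) ?_
  calc (0:ℝ) = f m := hm.symm
    _ ≤ _ := Finset.le_sup' f (mem_univ m)

/-- If `D = pdiag(d₁, …, dₙ)` is pseudo-diagonal with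
`d₁ ≤ … ≤ dₙ ≤ 0` and `n ≥ 3`, then `D^k` is the all-zeros matrix for every `k ≥ 2`. -/
theorem mpPow_pseudoDiagonal_nonpos {n : ℕ} [NeZero n] (hn : 3 ≤ n)
    (d : Fin n → ℝ) (hmono : Monotone d) (hneg : ∀ i, d i ≤ 0)
    (D : Fin n → Fin n → ℝ)
    (hD : ∀ i j, D i j = if i = j then d i else 0)
    (k : ℕ) (hk : 2 ≤ k) :
    mpPow D k = fun _ _ => (0 : ℝ) := by
  have hDle : ∀ i j, D i j ≤ 0 := by
    intro i j
    rw [hD]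
    split <;> [exact hneg i; exact le_rfl]
  have hsq : mpMul D D = fun _ _ => (0:ℝ) := by
    funext i j
    obtain ⟨m, hmi, hmj⟩ := aux_exists_ne hn i j
    refine aux_sup_zero _ (fun k => add_nonpos (hDle i k) (hDle k j)) m ?_
    rw [hD, hD, if_neg (fun h => hmi h.symm), if_neg hmj, add_zero]
  have hz : mpMul D (fun _ _ => (0:ℝ)) = fun _ _ => (0:ℝ) := by
    funext i j
    obtain ⟨m, hmi, _⟩ := aux_exists_ne hn i i
    refine aux_sup_zero _ (fun k => by simpa using hDle i k) m ?_
    simp [hD, if_neg (fun h : i = m => hmi h.symm)]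
  have key : ∀ l, (mpMul D)^[l + 1] D = fun _ _ => (0:ℝ) := by
    intro l
    induction l with
    | zero => simpa using hsq
    | succ m ih =>
      rw [Function.iterate_succ_apply', ih, hz]
  have : k - 1 = (k - 2) + 1 := by omega
  rw [mpPow, this, key]
end

section
/- Let A ∈ ℝ^{n×n}, let π be a permutation of {1,…,n} with inverse σ = π^{-1}, let p_1,…,p_n ∈ ℝ, and let B ∈ ℝ^{n×n} be defined by B_{ij} = −p_{σ(i)} + A_{σ(i),σ(j)} + p_{σ(j)} for all i, j (so B = P^{-1}⊗A⊗P for the corresponding generalized permutation matrix P). Then A is an optimal-node matrix with set of optimal nodes K(A) = {k_1,…,k_m} if and only if B is an optimal-node matrix with set of optimal nodes K(B) = {π(k_1),…,π(k_m)}. -/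
/-- `k` is an optimal node of `A`: `A i k + A k j ≥ A i l + A l j` for all `i, j, l`. -/
def IsOptimalNode {n : ℕ} (A : Fin n → Fin n → ℝ) (k : Fin n) : Prop :=
  ∀ i j l : Fin n, A i l + A l j ≤ A i k + A k j

/-- Let `B = P⁻¹ ⊗ A ⊗ P` for a generalized permutation matrix `P` with
permutation `π` and finite entries `p`, i.e. `B i j = -p (σ i) + A (σ i) (σ j) + p (σ j)`
with `σ = π⁻¹`.  Then `A` is an optimal-node matrix with optimal-node set `K` if and only
if `B` is an optimal-node matrix with optimal-node set `π '' K`. -/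
theorem isOptimalNode_conjugation {n : ℕ} (A : Fin n → Fin n → ℝ)
    (π : Equiv.Perm (Fin n)) (p : Fin n → ℝ)
    (B : Fin n → Fin n → ℝ)
    (hB : ∀ i j, B i j = -p (π.symm i) + A (π.symm i) (π.symm j) + p (π.symm j))
    (K : Set (Fin n)) :
    ((∃ k, IsOptimalNode A k) ∧ {k | IsOptimalNode A k} = K) ↔
      ((∃ k, IsOptimalNode B k) ∧ {k | IsOptimalNode B k} = π '' K) := by
  have key : ∀ k : Fin n, IsOptimalNode B (π k) ↔ IsOptimalNode A k := by
    intro k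
    constructor
    · intro h i j l
      have := h (π i) (π j) (π l)
      simp only [hB, Equiv.symm_apply_apply] at this
      linarith
    · intro h i j l
      simp only [hB, Equiv.symm_apply_apply]
      have := h (π.symm i) (π.symm j) (π.symm l)
      linarith
  have hset : {k | IsOptimalNode B k} = π '' {k | IsOptimalNode A k} := by
    ext x
    constructor
    · intro hx
      exact ⟨π.symm x, (key (π.symm x)).mp (by simpa using hx), by simp⟩
    · rintro ⟨y, hy, rfl⟩
      exact (key y).mpr hy
  constructor
  · rintro ⟨⟨k, hk⟩, rfl⟩
    exact ⟨⟨π k, (key k).mpr hk⟩, hset⟩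
  · rintro ⟨⟨k, hk⟩, hK⟩
    rw [hset] at hK
    have hKK : {k | IsOptimalNode A k} = K := by
      have := congrArg (fun s => π.symm '' s) hK
      simpa [Set.image_image] using this
    refine ⟨⟨π.symm k, ?_⟩, hKK⟩
    exact (key (π.symm k)).mp (by simpa using hk)
end

section
/- Let A = (a_{ij}) ∈ ℝ^{n×n} be a pseudo-diagonalizable matrix for which there exists k ∈ {1,…,n} with a_{kk} ≥ 0 and a_{ii} ≤ 0 for all i ≠ k. Then the maximum cycle mean satisfies λ(A) = a_{kk}, and a vector x ∈ ℝ^n is an eigenvector of A (i.e., max_j (a_{ij} + x_j) = λ + x_i for all i, for some λ ∈ ℝ) if and only if λ = a_{kk} and there exists α ∈ ℝ with x_i = α + a_{ik} for all i (x is a max-plus scalar multiple of the k-th column of A). -/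
open Finset

/-- `A` is pseudo-diagonalizable: similar, via a generalized permutation matrix given by a
permutation `π` and reals `p i`, to a pseudo-diagonal matrix `D` (a real matrix whose
off-diagonal entries are `0`). -/
def PseudoDiagonalizable {n : ℕ} (A : Fin n → Fin n → ℝ) : Prop :=
  ∃ (π : Equiv.Perm (Fin n)) (p : Fin n → ℝ) (D : Fin n → Fin n → ℝ),
    (∀ i j, i ≠ j → D i j = 0) ∧ ∀ i j, A i j = p i + D (π i) (π j) - p j

/-- The weight of the cycle determined by a list `l` of distinct indices. -/
def cycleWeight {n : ℕ} (A : Fin n → Fin n → ℝ) (l : List (Fin n)) : ℝ :=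
  ((l.zip (l.rotate 1)).map fun p => A p.1 p.2).sum

/-- The mean of a cycle: its weight divided by its length. -/
noncomputable def cycleMean {n : ℕ} (A : Fin n → Fin n → ℝ) (l : List (Fin n)) : ℝ :=
  cycleWeight A l / l.length

/-- The maximum cycle mean `λ(A)`. -/
noncomputable def maxCycleMean {n : ℕ} (A : Fin n → Fin n → ℝ) : ℝ :=
  sSup {m | ∃ l : List (Fin n), l ≠ [] ∧ l.Nodup ∧ m = cycleMean A l}

/-!
Writing `A i j = p i + B i j - p j` with `B i j = D (π i) (π j)`, the matrix `B` is again
pseudo-diagonal and has the same diagonal as `A`. Cycle weights, the eigenvector equations (after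
replacing `x` by `x - p`) and the property of being a max-plus multiple of the `k`-th column are
all invariant under this diagonal similarity, so it suffices to treat `B`. There every cycle of
length at least two has weight `0`, so `λ(B)` is the largest of the loops `B i i` and `0`, which is
`B k k`. For an eigenvector `y` of `B`, every row `i ≠ k` has entries `≤ 0`; comparing rows at a
maximiser of `y` shows that `k` itself is a maximiser and the eigenvalue is `B k k`, and then row
`i ≠ k` forces `y i = y k - B k k`.
-/

namespace List

theorem fst_ne_snd_of_mem_zip_rotate_one {α : Type*} {l : List α} (hl : l.Nodup)
    (hlen : 2 ≤ l.length) {q : α × α} (hq : q ∈ l.zip (l.rotate 1)) : q.1 ≠ q.2 := by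
  obtain ⟨i, hi, rfl⟩ := mem_iff_getElem.mp hq
  simp only [length_zip, length_rotate, min_self] at hi
  simp only [getElem_zip, getElem_rotate, ne_eq, hl.getElem_inj_iff]
  rcases Nat.lt_or_ge (i + 1) l.length with h | h
  · rw [Nat.mod_eq_of_lt h]; omega
  · rw [show i + 1 = l.length by omega, Nat.mod_self]; omega

end List

section CycleMean

variable {n : ℕ}

theorem cycleWeight_singleton (A : Fin n → Fin n → ℝ) (a : Fin n) : cycleWeight A [a] = A a a := by
  simp [cycleWeight]

theorem cycleWeight_eq_of_diagonal_similar {A B : Fin n → Fin n → ℝ} {p : Fin n → ℝ}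
    (hAB : ∀ i j, A i j = p i + B i j - p j) (l : List (Fin n)) :
    cycleWeight A l = cycleWeight B l := by
  have hlen : l.length = (l.rotate 1).length := (l.length_rotate 1).symm
  -- the potential `p` telescopes around the cycle
  have htel : ((l.zip (l.rotate 1)).map fun q => p q.1).sum =
      ((l.zip (l.rotate 1)).map fun q => p q.2).sum := by
    rw [show (fun q : Fin n × Fin n => p q.1) = p ∘ Prod.fst from rfl,
      show (fun q : Fin n × Fin n => p q.2) = p ∘ Prod.snd from rfl, ← List.map_map,
      ← List.map_map, List.map_fst_zip hlen.le,
      List.map_snd_zip hlen.ge, ((List.rotate_perm l 1).map p).sum_eq]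
  have hsum : cycleWeight A l + ((l.zip (l.rotate 1)).map fun q => p q.2).sum =
      cycleWeight B l + ((l.zip (l.rotate 1)).map fun q => p q.1).sum := by
    rw [cycleWeight, cycleWeight, ← List.sum_map_add, ← List.sum_map_add]
    congr 1
    refine List.map_congr_left fun q _ => ?_
    rw [hAB]
    ring
  linarith

theorem cycleWeight_eq_zero_of_pseudoDiagonal {B : Fin n → Fin n → ℝ}
    (hB : ∀ i j, i ≠ j → B i j = 0) {l : List (Fin n)} (hl : l.Nodup) (hlen : 2 ≤ l.length) :
    cycleWeight B l = 0 :=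
  List.sum_eq_zero fun _ hx => by
    obtain ⟨q, hq, rfl⟩ := List.mem_map.mp hx
    exact hB _ _ (List.fst_ne_snd_of_mem_zip_rotate_one hl hlen hq)

theorem maxCycleMean_eq_of_diagonal_similar {A B : Fin n → Fin n → ℝ} {p : Fin n → ℝ}
    (hAB : ∀ i j, A i j = p i + B i j - p j) : maxCycleMean A = maxCycleMean B := by
  simp only [maxCycleMean, cycleMean, cycleWeight_eq_of_diagonal_similar hAB]

theorem maxCycleMean_eq_of_pseudoDiagonal {B : Fin n → Fin n → ℝ}
    (hB : ∀ i j, i ≠ j → B i j = 0) {k : Fin n} (hk : 0 ≤ B k k) (hdiag : ∀ i, B i i ≤ B k k) :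
    maxCycleMean B = B k k := by
  have hloop : B k k = cycleMean B [k] := by simp [cycleMean, cycleWeight_singleton]
  refine IsGreatest.csSup_eq ⟨⟨[k], by simp, by simp, hloop⟩, ?_⟩
  rintro _ ⟨l, hne, hl, rfl⟩
  rcases Nat.lt_or_ge l.length 2 with hlen | hlen
  · have hlen1 : l.length = 1 := by have := List.length_pos_iff.mpr hne; omega
    obtain ⟨a, rfl⟩ := List.length_eq_one_iff.mp hlen1
    simpa [cycleMean, cycleWeight_singleton] using hdiag a
  · simpa [cycleMean, cycleWeight_eq_zero_of_pseudoDiagonal hB hl hlen] using hk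

end CycleMean

section Eigen

variable {ι : Type*}

/-- The max-plus eigen-equation `max_j (A i j + x j) = l + x i`, with the maximum written as
"bounded by, and attained". -/
def IsMaxPlusEigen (A : ι → ι → ℝ) (x : ι → ℝ) (l : ℝ) : Prop :=
  ∀ i, (∀ j, A i j + x j ≤ l + x i) ∧ ∃ j, A i j + x j = l + x i

theorem isMaxPlusEigen_iff_sup' [Fintype ι] [Nonempty ι] {A : ι → ι → ℝ} {x : ι → ℝ} {l : ℝ} :
    IsMaxPlusEigen A x l ↔ ∀ i, univ.sup' univ_nonempty (fun j => A i j + x j) = l + x i := by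
  refine forall_congr' fun i => ⟨fun ⟨hle, j, hj⟩ => ?_, fun h => ⟨fun j => ?_, ?_⟩⟩
  · exact le_antisymm (sup'_le _ _ fun j _ => hle j) 
      (hj.symm.trans_le (Finset.le_sup' (fun j => A i j + x j) (mem_univ j)))
  · exact (Finset.le_sup' (fun j => A i j + x j) (mem_univ j)).trans_eq h
  · obtain ⟨j, -, hj⟩ := exists_mem_eq_sup' univ_nonempty (fun j => A i j + x j)
    exact ⟨j, hj.symm.trans h⟩

section DiagonalSimilar

variable {A B : ι → ι → ℝ} {p : ι → ℝ} (hAB : ∀ i j, A i j = p i + B i j - p j)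
include hAB

theorem isMaxPlusEigen_iff_of_diagonal_similar {x : ι → ℝ} {l : ℝ} :
    IsMaxPlusEigen A x l ↔ IsMaxPlusEigen B (x - p) l := by
  have shift : ∀ i j, A i j + x j - (l + x i) = B i j + (x - p) j - (l + (x - p) i) := by
    intro i j
    simp only [hAB, Pi.sub_apply]
    ring
  simp only [IsMaxPlusEigen, ← sub_nonpos (a := A _ _ + _), ← sub_eq_zero (a := A _ _ + _),
    ← sub_nonpos (a := B _ _ + _), ← sub_eq_zero (a := B _ _ + _), shift]

theorem exists_eq_add_col_iff_of_diagonal_similar {x : ι → ℝ} {k : ι} :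
    (∃ α : ℝ, ∀ i, x i = α + A i k) ↔ ∃ c : ℝ, ∀ i, (x - p) i = c + B i k := by
  constructor
  · rintro ⟨α, hα⟩
    exact ⟨α - p k, fun i => by rw [Pi.sub_apply, hα, hAB]; ring⟩
  · rintro ⟨c, hc⟩
    exact ⟨c + p k, fun i => by linarith [hc i, hAB i k, show (x - p) i = x i - p i from rfl]⟩

end DiagonalSimilar

section PseudoDiagonal

variable {B : ι → ι → ℝ} (hB : ∀ i j, i ≠ j → B i j = 0) {k : ι} (hk : 0 ≤ B k k)
  (hk' : ∀ i, i ≠ k → B i i ≤ 0)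
include hB hk'

theorem le_zero_of_pseudoDiagonal {i : ι} (hi : i ≠ k) (j : ι) : B i j ≤ 0 := by
  rcases eq_or_ne i j with rfl | hij
  · exact hk' i hi
  · exact (hB i j hij).le

include hk

theorem le_of_pseudoDiagonal (i j : ι) : B i j ≤ B k k := by
  rcases eq_or_ne i k with rfl | hi
  · rcases eq_or_ne i j with rfl | hij
    · exact le_rfl
    · exact (hB i j hij).le.trans hk
  · exact (le_zero_of_pseudoDiagonal hB hk' hi j).trans hk

theorem isMaxPlusEigen_col_of_pseudoDiagonal (c : ℝ) :
    IsMaxPlusEigen B (fun i => c + B i k) (B k k) := by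
  refine fun i => ⟨fun j => ?_, k, by ring⟩
  rcases eq_or_ne j k with rfl | hj
  · linarith
  · have hik : 0 ≤ B i k := by
      rcases eq_or_ne i k with rfl | hi
      · exact hk
      · exact (hB i k hi).ge
    linarith [hB j k hj, le_of_pseudoDiagonal hB hk hk' i j]

theorem IsMaxPlusEigen.eq_add_col_of_pseudoDiagonal [Finite ι] {y : ι → ℝ} {l : ℝ}
    (h : IsMaxPlusEigen B y l) : l = B k k ∧ ∀ i, y i = (y k - B k k) + B i k := by
  have : Nonempty ι := ⟨k⟩
  obtain ⟨m, hm⟩ := Finite.exists_max y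
  have hl : l = B k k := by
    obtain ⟨j, hj⟩ := (h m).2
    linarith [(h k).1 k, le_of_pseudoDiagonal hB hk hk' m j, hm j]
  -- if some `y m > y k`, row `m` forces `l ≤ 0`, and then row `k` gives `y m ≤ y k`
  have hkmax : ∀ j, y j ≤ y k := by
    suffices y m ≤ y k from fun j => (hm j).trans this
    by_contra! hlt
    have hmk : m ≠ k := by rintro rfl; exact lt_irrefl _ hlt
    obtain ⟨j, hj⟩ := (h m).2
    linarith [le_zero_of_pseudoDiagonal hB hk' hmk j, hm j, (h k).1 m, hB k m hmk.symm]
  refine ⟨hl, fun i => ?_⟩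
  rcases eq_or_ne i k with rfl | hi
  · ring
  · obtain ⟨j, hj⟩ := (h i).2
    linarith [(h i).1 k, hB i k hi, le_zero_of_pseudoDiagonal hB hk' hi j, hkmax j]

theorem isMaxPlusEigen_iff_of_pseudoDiagonal [Finite ι] {y : ι → ℝ} {l : ℝ} :
    IsMaxPlusEigen B y l ↔ l = B k k ∧ ∃ c : ℝ, ∀ i, y i = c + B i k := by
  refine ⟨fun h => ?_, ?_⟩
  · obtain ⟨hl, hy⟩ := h.eq_add_col_of_pseudoDiagonal hB hk hk'
    exact ⟨hl, _, hy⟩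
  · rintro ⟨rfl, c, hy⟩
    obtain rfl : y = fun i => c + B i k := funext hy
    exact isMaxPlusEigen_col_of_pseudoDiagonal hB hk hk' c

end PseudoDiagonal

end Eigen

/-- Let `A` be pseudo-diagonalizable with `A k k ≥ 0` and `A i i ≤ 0` for
`i ≠ k`.  Then `λ(A) = A k k`, and a real vector `x` is an eigenvector of `A` with
eigenvalue `l` iff `l = A k k` and `x` is a max-plus scalar multiple of the `k`-th column
of `A`. -/
theorem eigen_pseudoDiagonalizable_optimalNode {n : ℕ} [NeZero n]
    (A : Fin n → Fin n → ℝ) (hA : PseudoDiagonalizable A)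
    (k : Fin n) (hk : 0 ≤ A k k) (hk' : ∀ i, i ≠ k → A i i ≤ 0) :
    maxCycleMean A = A k k ∧
      ∀ (x : Fin n → ℝ) (l : ℝ),
        (∀ i, (univ.sup' univ_nonempty fun j => A i j + x j) = l + x i) ↔
          (l = A k k ∧ ∃ α : ℝ, ∀ i, x i = α + A i k) := by
  obtain ⟨π, p, D, hD, hAB⟩ := hA
  set B : Fin n → Fin n → ℝ := fun i j => D (π i) (π j)
  have hB : ∀ i j, i ≠ j → B i j = 0 := fun i j hij => hD _ _ (π.injective.ne hij)
  have hdiag : ∀ i, B i i = A i i := fun i => by rw [hAB]; ring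
  rw [← hdiag k] at hk ⊢
  simp only [← hdiag] at hk'
  refine ⟨?_, fun x l => ?_⟩
  · rw [maxCycleMean_eq_of_diagonal_similar hAB]
    exact maxCycleMean_eq_of_pseudoDiagonal hB hk fun i => le_of_pseudoDiagonal hB hk hk' i i
  · rw [← isMaxPlusEigen_iff_sup', isMaxPlusEigen_iff_of_diagonal_similar hAB,
      exists_eq_add_col_iff_of_diagonal_similar hAB]
    exact isMaxPlusEigen_iff_of_pseudoDiagonal hB hk hk'
end

section
/- Let D = pdiag(d_1,…,d_n) be a pseudo-diagonal matrix with d_1 ≤ … ≤ d_n and n ≥ 2, and let D_λ be the matrix with entries (D_λ)_{ij} = D_{ij} − λ(D), where λ(D) = max(d_n, 0). Then the transitive closure Γ(D_λ) = D_λ ⊕ D_λ^2 ⊕ … ⊕ D_λ^n equals D_λ ⊕ D_λ^2 (entrywise maximum of the first two max-plus powers). -/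
open Finset

/-- The transitive closure `Γ(A) = A ⊕ A² ⊕ … ⊕ Aⁿ` (entrywise maximum). -/
noncomputable def gammaClosure {n : ℕ} [NeZero n] (A : Fin n → Fin n → ℝ) :
    Fin n → Fin n → ℝ :=
  fun i j => (Finset.Icc 1 n).sup'
    (Finset.nonempty_Icc.mpr (Nat.one_le_iff_ne_zero.mpr (NeZero.ne n)))
    fun k => mpPow A k i j

/-- Let `D = pdiag(d₁, …, dₙ)` with `d₁ ≤ … ≤ dₙ`, `n ≥ 2`, and let
`D_λ` have entries `D i j - λ(D)` where `λ(D) = max dₙ 0`.  Then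
`Γ(D_λ) = D_λ ⊕ D_λ²`. -/
theorem gamma_pseudoDiagonal {n : ℕ} [NeZero n] (hn : 2 ≤ n)
    (d : Fin n → ℝ) (hmono : Monotone d)
    (D : Fin n → Fin n → ℝ)
    (hD : ∀ i j, D i j = if i = j then d i else 0)
    (Dl : Fin n → Fin n → ℝ)
    (hDl : ∀ i j, Dl i j = D i j - max (d ⟨n - 1, by omega⟩) 0) :
    gammaClosure Dl = fun i j => max (Dl i j) (mpPow Dl 2 i j) := by
  set L : ℝ := max (d ⟨n - 1, by omega⟩) 0 with hLdef
  have hL0 : (0 : ℝ) ≤ L := le_max_right _ _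
  have hdle : ∀ i, d i ≤ L := fun i => by
    refine le_trans (hmono ?_) (le_max_left _ _)
    rw [Fin.le_def]
    have := i.isLt
    simp only []
    omega
  have hA0 : ∀ i j, Dl i j ≤ 0 := by
    intro i j
    rw [hDl, hD]
    split_ifs
    · linarith [hdle i]
    · linarith
  have hoff : ∀ i j, i ≠ j → Dl i j = 0 - L := by
    intro i j h
    rw [hDl, hD, if_neg h]
  set M : Fin n → Fin n → ℝ := fun i j => max (Dl i j) (mpMul Dl Dl i j) with hM
  have hsq : ∀ i l j : Fin n, Dl i l + Dl l j ≤ mpMul Dl Dl i j := fun i l j =>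
    Finset.le_sup' (fun k => Dl i k + Dl k j) (Finset.mem_univ l)
  have key : ∀ i l m j : Fin n, Dl i l + Dl l m + Dl m j ≤ M i j := by
    intro i l m j
    by_cases hil : i = l
    · subst hil
      have h1 := hA0 i i
      have h2 := hsq i m j
      simp only [hM]
      have : Dl i m + Dl m j ≤ mpMul Dl Dl i j := h2
      refine le_max_of_le_right ?_
      linarith
    by_cases hlm : l = m
    · subst hlm
      have h1 := hA0 l l
      have h2 := hsq i l j
      refine le_max_of_le_right ?_
      linarith
    by_cases hmj : m = j
    · have h1 := hA0 j j
      have h2 := hsq i l j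
      rw [hmj]
      refine le_max_of_le_right ?_
      linarith
    · have e1 := hoff i l hil
      have e2 := hoff l m hlm
      have e3 := hoff m j hmj
      by_cases hij : i = j
      · subst hij
        have h2 := hsq i l i
        have e4 := hoff l i (fun h => hil h.symm)
        refine le_max_of_le_right ?_
        rw [e1, e2, e3]
        rw [e1, e4] at h2
        linarith
      · have e5 := hoff i j hij
        refine le_max_of_le_left ?_
        rw [e1, e2, e3, e5]
        linarith
  have step : ∀ i j, mpMul Dl M i j ≤ M i j := by
    intro i j
    refine Finset.sup'_le _ _ ?_
    intro l _
    rcases le_total (Dl l j) (mpMul Dl Dl l j) with h | h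
    · have hmx : M l j = mpMul Dl Dl l j := max_eq_right h
      rw [hmx]
      have hs : (univ.sup' univ_nonempty fun m => Dl l m + Dl m j) ≤ M i j - Dl i l := by
        refine Finset.sup'_le _ _ ?_
        intro m _
        have := key i l m j
        linarith
      have : mpMul Dl Dl l j ≤ M i j - Dl i l := hs
      linarith
    · have hmx : M l j = Dl l j := max_eq_left h
      rw [hmx]
      have := hsq i l j
      exact le_trans this (le_max_right _ _)
  have pow1 : mpPow Dl 1 = Dl := rfl
  have pow_succ : ∀ k : ℕ, mpPow Dl (k + 2) = mpMul Dl (mpPow Dl (k + 1)) := by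
    intro k
    show (mpMul Dl)^[k + 1] Dl = mpMul Dl ((mpMul Dl)^[k] Dl)
    rw [Function.iterate_succ_apply']
  have pow_le : ∀ k : ℕ, ∀ i j, mpPow Dl (k + 1) i j ≤ M i j := by
    intro k
    induction k with
    | zero => intro i j; exact le_max_left _ _
    | succ m ih =>
      intro i j
      rw [pow_succ]
      refine le_trans ?_ (step i j)
      refine Finset.sup'_le _ _ ?_
      intro l _
      calc Dl i l + mpPow Dl (m + 1) l j ≤ Dl i l + M l j := by linarith [ih l j]
        _ ≤ mpMul Dl M i j := Finset.le_sup' (fun k => Dl i k + M k j) (Finset.mem_univ l)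
  funext i j
  show gammaClosure Dl i j = max (Dl i j) (mpPow Dl 2 i j)
  apply le_antisymm
  · refine Finset.sup'_le _ _ ?_
    intro k hk
    rw [Finset.mem_Icc] at hk
    obtain ⟨m, rfl⟩ : ∃ m, k = m + 1 := ⟨k - 1, by omega⟩
    exact pow_le m i j
  · refine max_le ?_ ?_
    · exact Finset.le_sup' (fun k => mpPow Dl k i j)
        (Finset.mem_Icc.mpr ⟨le_refl 1, le_trans (by norm_num) hn⟩)
    · exact Finset.le_sup' (fun k => mpPow Dl k i j)
        (Finset.mem_Icc.mpr ⟨by norm_num, hn⟩)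
end
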